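/- arXiv:2008.03738 — 3 statements merged into one kernel-verified Lean document; each statement's English description precedes it below -/
import Mathlib

section
/- Let μ be a probability measure on ℝ² that is absolutely continuous with respect to two-dimensional Lebesgue measure, with density f ≥ 0. Define the marginal density g(x₁) = ∫_ℝ f(x₁,t) dt, the marginal CDF F₁(x₁) = ∫_{−∞}^{x₁} g(s) ds, and the conditional CDF F₂(x₁,x₂) = (∫_{−∞}^{x₂} f(x₁,t) dt) / g(x₁) whenever g(x₁) > 0 (set F₂(x₁,x₂) = 0 when g(x₁) = 0). Then the map Φ(x₁,x₂) = (F₁(x₁), F₂(x₁,x₂)) pushes μ forward to the uniform distribution on [0,1]², i.e., Measure.map Φ μ equals two-dimensional Lebesgue measure restricted to [0,1]². -/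
/-!
If `P` is an atomless probability measure on `ℝ`, its CDF `F` is continuous, so for `0 < b < 1`
the set `{F ≤ b}` is a closed half-line `Iic s` with `F s = b` (intermediate value theorem);
hence `P {F ≤ b} = b` and `F` pushes `P` forward to the uniform law `U` on `[0, 1]`.

For the two-dimensional map, Tonelli gives
`μ (Φ⁻¹' (s ×ˢ t)) = ∫⁻ x in F₁⁻¹' s, μₓ (F₂ x ⁻¹' t)`, where `μₓ` has density `f (x, ·)`.
Each fibre `μₓ` is pushed by its normalised CDF `F₂ x` to `μₓ(ℝ) • U`, and the marginal, with
density `g x = μₓ(ℝ)`, is pushed by `F₁` to `U`, so `μ (Φ⁻¹' (s ×ˢ t)) = U s * U t`.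
-/

open MeasureTheory ProbabilityTheory Set
open scoped ENNReal

namespace ProbabilityTheory

variable {P : Measure ℝ} [IsProbabilityMeasure P] [NullSingletonClass P]

lemma continuous_cdf : Continuous (cdf P) := by
  refine continuous_iff_continuousAt.2 fun x => ?_
  rw [(monotone_cdf P).continuousAt_iff_leftLim_eq_rightLim, (cdf P).rightLim_eq]
  have hjump : ENNReal.ofReal (cdf P x - Function.leftLim (cdf P) x) = 0 := by
    rw [← StieltjesFunction.measure_singleton, measure_cdf, measure_singleton]
  rw [ENNReal.ofReal_eq_zero] at hjump
  linarith [(monotone_cdf P).leftLim_le (le_refl x)]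

lemma measure_setOf_cdf_le (b : ℝ) : P {x | cdf P x ≤ b} = ENNReal.ofReal (min b 1) := by
  set S := {x | cdf P x ≤ b}
  rcases le_or_gt 1 b with hb | hb
  · have hS : S = univ := eq_univ_of_forall fun x => (cdf_le_one P x).trans hb
    rw [hS, measure_univ, min_eq_right hb, ENNReal.ofReal_one]
  obtain ⟨N, hN⟩ :=
    ((tendsto_cdf_atTop (μ := P)).eventually (lt_mem_nhds hb)).exists_forall_of_atTop
  rcases S.eq_empty_or_nonempty with hS | hS
  · have hb0 : b ≤ 0 := ge_of_tendsto' (tendsto_cdf_atBot (μ := P)) fun x =>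
      (not_le.1 (eq_empty_iff_forall_notMem.1 hS x)).le
    rw [hS, measure_empty, ENNReal.ofReal_of_nonpos (min_le_of_left_le hb0)]
  have hbdd : BddAbove S := ⟨N, fun x hx => le_of_not_gt fun hNx => (hN x hNx.le).not_ge hx⟩
  set s := sSup S
  have hsS : s ∈ S := (isClosed_le continuous_cdf continuous_const).csSup_mem hS hbdd
  have hSeq : S = Iic s := Subset.antisymm (fun x hx => le_csSup hbdd hx)
    fun x hx => (monotone_cdf P hx).trans hsS
  obtain ⟨r, hr⟩ : b ∈ range (cdf P) :=
    mem_range_of_exists_le_of_exists_ge continuous_cdf hS ⟨N, (hN N le_rfl).le⟩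
  have hcdf_s : cdf P s = b :=
    le_antisymm hsS (hr ▸ monotone_cdf P (le_csSup hbdd (show r ∈ S from hr.le)))
  rw [hSeq, ← ofReal_cdf, hcdf_s, min_eq_left hb.le]

theorem map_cdf : P.map (cdf P) = volume.restrict (Icc 0 1) := by
  have : IsProbabilityMeasure (volume.restrict (Icc (0 : ℝ) 1)) := ⟨by simp⟩
  refine Measure.ext_of_Iic _ _ fun b => ?_
  rw [Measure.map_apply (monotone_cdf P).measurable measurableSet_Iic,
    Measure.restrict_apply measurableSet_Iic]
  have hIcc : Iic b ∩ Icc 0 1 = Icc 0 (min b 1) := by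
    ext x; simp only [mem_inter_iff, mem_Iic, mem_Icc, le_min_iff]; tauto
  rw [hIcc, Real.volume_Icc, sub_zero]
  exact measure_setOf_cdf_le b

end ProbabilityTheory

namespace MeasureTheory

theorem Measure.map_real_Iic_div_eq_smul {ν : Measure ℝ} [IsFiniteMeasure ν]
    [NullSingletonClass ν] :
    ν.map (fun x => ν.real (Iic x) / ν.real univ) = ν univ • volume.restrict (Icc 0 1) := by
  rcases eq_zero_or_neZero ν with rfl | hν
  · simp
  set P := (ν univ)⁻¹ • ν
  have : NullSingletonClass P := ⟨fun x => by simp [P]⟩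
  have hcdf : cdf P = fun x => ν.real (Iic x) / ν.real univ := by
    ext x
    simp [cdf_eq_real, P, Measure.real, ENNReal.toReal_mul, div_eq_inv_mul]
  have hνP : ν = ν univ • P := by
    rw [smul_smul, ENNReal.mul_inv_cancel (NeZero.ne _) (measure_ne_top _ _), one_smul]
  rw [← hcdf, ← map_cdf (P := P)]
  conv_lhs => rw [hνP]
  rw [Measure.map_smul]

theorem measureReal_withDensity_ofReal {α : Type*} [MeasurableSpace α] {μ : Measure α}
    {f : α → ℝ} (hf : AEStronglyMeasurable f μ) (hf0 : 0 ≤ᵐ[μ] f) {s : Set α}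
    (hs : MeasurableSet s) :
    (μ.withDensity fun x => ENNReal.ofReal (f x)).real s = ∫ x in s, f x ∂μ := by
  rw [integral_eq_lintegral_of_nonneg_ae (ae_restrict_of_ae hf0) hf.restrict,
    Measure.real, withDensity_apply _ hs]

theorem map_withDensity_ofReal_integral_Iic_div {μ : Measure ℝ} [NullSingletonClass μ]
    {h : ℝ → ℝ} (hm : AEStronglyMeasurable h μ) (h0 : 0 ≤ᵐ[μ] h)
    (hfin : ∫⁻ x, ENNReal.ofReal (h x) ∂μ ≠ ∞) :
    (μ.withDensity fun x => ENNReal.ofReal (h x)).map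
        (fun x => (∫ t in Iic x, h t ∂μ) / ∫ t, h t ∂μ) =
      (∫⁻ x, ENNReal.ofReal (h x) ∂μ) • volume.restrict (Icc 0 1) := by
  have := isFiniteMeasure_withDensity hfin
  simp_rw [← measureReal_withDensity_ofReal hm h0 measurableSet_Iic]
  rw [← setIntegral_univ, ← measureReal_withDensity_ofReal hm h0 .univ, ← setLIntegral_univ,
    ← withDensity_apply _ .univ]
  exact Measure.map_real_Iic_div_eq_smul

theorem monotone_setIntegral_Iic {μ : Measure ℝ} {h : ℝ → ℝ} (hi : Integrable h μ)
    (h0 : 0 ≤ᵐ[μ] h) : Monotone fun x => ∫ t in Iic x, h t ∂μ := fun _ _ hxy =>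
  setIntegral_mono_set hi.integrableOn (ae_restrict_of_ae h0) (Iic_subset_Iic.2 hxy).eventuallyLE

theorem Measurable.setIntegral_Iic_prod {α : Type*} [MeasurableSpace α] {ν : Measure ℝ}
    [SFinite ν] {f : α × ℝ → ℝ} (hf : Measurable f) :
    Measurable fun p : α × ℝ => ∫ t in Iic p.2, f (p.1, t) ∂ν := by
  have hind : Measurable fun q : (α × ℝ) × ℝ =>
      {q : (α × ℝ) × ℝ | q.2 ≤ q.1.2}.indicator (fun q => f (q.1.1, q.2)) q :=
    (hf.comp (measurable_fst.fst.prodMk measurable_snd)).indicator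
      (measurableSet_le measurable_snd measurable_fst.snd)
  convert (hind.stronglyMeasurable.integral_prod_right' (ν := ν)).measurable using 2 with p
  rw [← integral_indicator measurableSet_Iic]
  rfl

theorem ae_lintegral_ofReal_eq_ofReal_integral {α β : Type*} [MeasurableSpace α]
    [MeasurableSpace β] {μ : Measure α} {ν : Measure β} [SFinite ν] {f : α × β → ℝ}
    (hf : Measurable f) (hf0 : ∀ p, 0 ≤ f p)
    (hfin : ∫⁻ p, ENNReal.ofReal (f p) ∂μ.prod ν ≠ ∞) :
    (fun x => ∫⁻ y, ENNReal.ofReal (f (x, y)) ∂ν) =ᵐ[μ]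
      fun x => ENNReal.ofReal (∫ y, f (x, y) ∂ν) := by
  have hfin' : ∀ᵐ x ∂μ, ∫⁻ y, ENNReal.ofReal (f (x, y)) ∂ν < ∞ :=
    ae_lt_top hf.ennreal_ofReal.lintegral_prod_right'
      (by rwa [← lintegral_prod _ hf.ennreal_ofReal.aemeasurable])
  filter_upwards [hfin'] with x hx
  rw [integral_eq_lintegral_of_nonneg_ae (ae_of_all _ fun y => hf0 (x, y))
    (hf.comp measurable_prodMk_left).aestronglyMeasurable, ENNReal.ofReal_toReal hx.ne]

theorem Measure.map_withDensity_prod_eq_prod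
    {α β γ δ : Type*} [MeasurableSpace α] [MeasurableSpace β] [MeasurableSpace γ]
    [MeasurableSpace δ] {ρ : Measure α} {ν : Measure β} [SFinite ν]
    {F : α × β → ℝ≥0∞} (hF : Measurable F) {u : α → γ} (hu : Measurable u)
    {v : α → β → δ} (hv : Measurable (Function.uncurry v))
    {U : Measure γ} {V : Measure δ} [SigmaFinite U] [SigmaFinite V]
    (hmarg : (ρ.withDensity fun x => ∫⁻ y, F (x, y) ∂ν).map u = U)
    (hfib : ∀ᵐ x ∂ρ, (ν.withDensity fun y => F (x, y)).map (v x) = (∫⁻ y, F (x, y) ∂ν) • V) :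
    ((ρ.prod ν).withDensity F).map (fun p => (u p.1, v p.1 p.2)) = U.prod V := by
  have hΦ : Measurable fun p : α × β => (u p.1, v p.1 p.2) := (hu.comp measurable_fst).prodMk hv
  refine (Measure.prod_eq fun s t hs ht => ?_).symm
  have hst := hΦ (hs.prod ht)
  rw [Measure.map_apply hΦ (hs.prod ht), withDensity_apply _ hst, ← lintegral_indicator hst,
    lintegral_prod _ (hF.indicator hst).aemeasurable]
  calc ∫⁻ x, ∫⁻ y, _ ∂ν ∂ρ = ∫⁻ x in u ⁻¹' s, (∫⁻ y, F (x, y) ∂ν) * V t ∂ρ := by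
        rw [← lintegral_indicator (hu hs)]
        refine lintegral_congr_ae (hfib.mono fun x hx => ?_)
        have hvx : Measurable (v x) := hv.comp measurable_prodMk_left
        by_cases hxs : u x ∈ s
        · rw [indicator_of_mem (show x ∈ u ⁻¹' s from hxs), ← smul_eq_mul, ← Measure.smul_apply,
            ← hx, Measure.map_apply hvx ht, withDensity_apply _ (hvx ht),
            ← lintegral_indicator (hvx ht)]
          refine lintegral_congr fun y => ?_
          by_cases hy : v x y ∈ t <;> simp [indicator, hxs, hy]
        · simp [indicator, hxs]
    _ = U s * V t := by
        rw [lintegral_mul_const _ hF.lintegral_prod_right', ← withDensity_apply _ (hu hs),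
          ← Measure.map_apply hu hs, hmarg]

end MeasureTheory

/-- **Rosenblatt's uniform transformer, two-dimensional case.**
If `μ` is a probability measure on `ℝ²` with Lebesgue density `f ≥ 0`, `g` is the first
marginal density, `F₁` the first marginal CDF and `F₂` the conditional CDF of the second
coordinate given the first (set to `0` where `g` vanishes), then the map
`Φ(x₁,x₂) = (F₁ x₁, F₂ x₁ x₂)` pushes `μ` forward to the uniform distribution on `[0,1]²`. -/
theorem stmt_1 (μ : Measure (ℝ × ℝ)) [IsProbabilityMeasure μ]
    (f : ℝ × ℝ → ℝ) (hf_meas : Measurable f) (hf_nonneg : ∀ p, 0 ≤ f p)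
    (hμ : μ = volume.withDensity fun p => ENNReal.ofReal (f p))
    (g : ℝ → ℝ) (hg : ∀ x₁, g x₁ = ∫ t, f (x₁, t))
    (F₁ : ℝ → ℝ) (hF₁ : ∀ x₁, F₁ x₁ = ∫ s in Set.Iic x₁, g s)
    (F₂ : ℝ → ℝ → ℝ)
    (hF₂ : ∀ x₁ x₂, F₂ x₁ x₂ =
      if 0 < g x₁ then (∫ t in Set.Iic x₂, f (x₁, t)) / g x₁ else 0)
    (Φ : ℝ × ℝ → ℝ × ℝ) (hΦ : ∀ p, Φ p = (F₁ p.1, F₂ p.1 p.2)) :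
    Measure.map Φ μ = volume.restrict (Set.Icc (0 : ℝ) 1 ×ˢ Set.Icc (0 : ℝ) 1) := by
  subst hμ
  have htotal : ∫⁻ p, ENNReal.ofReal (f p) ∂(volume.prod volume) = 1 := by
    rw [← Measure.volume_eq_prod, ← setLIntegral_univ, ← withDensity_apply _ .univ, measure_univ]
  have hD : (fun x => ∫⁻ y, ENNReal.ofReal (f (x, y))) =ᵐ[volume]
      fun x => ENNReal.ofReal (g x) := by
    simpa only [hg] using ae_lintegral_ofReal_eq_ofReal_integral hf_meas hf_nonneg (by simp [htotal])
  have hg_total : ∫⁻ x, ENNReal.ofReal (g x) = 1 := by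
    rw [← lintegral_congr_ae hD, ← lintegral_prod _ hf_meas.ennreal_ofReal.aemeasurable, htotal]
  have hg_nonneg (x : ℝ) : 0 ≤ g x := hg x ▸ integral_nonneg fun _ => hf_nonneg _
  have hg_meas : Measurable g :=
    funext hg ▸ hf_meas.stronglyMeasurable.integral_prod_right'.measurable
  have hg_int : Integrable g := ⟨hg_meas.aestronglyMeasurable,
    (hasFiniteIntegral_iff_ofReal (ae_of_all _ hg_nonneg)).2 (by simp [hg_total])⟩
  have hF₁_eq : F₁ = fun x => (∫ s in Iic x, g s) / ∫ s, g s := by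
    rw [integral_eq_lintegral_of_nonneg_ae (ae_of_all _ hg_nonneg) hg_meas.aestronglyMeasurable,
      hg_total]
    ext x
    simp [hF₁]
  -- the case split in `hF₂` is plain division, since `a / 0 = 0`
  have hF₂_eq : F₂ = fun x y => (∫ t in Iic y, f (x, t)) / g x := by
    ext x y
    rw [hF₂]
    split_ifs with hpos
    · rfl
    · rw [le_antisymm (not_lt.1 hpos) (hg_nonneg x), div_zero]
  rw [Measure.volume_eq_prod, ← Measure.prod_restrict, funext hΦ]
  refine Measure.map_withDensity_prod_eq_prod hf_meas.ennreal_ofReal ?_ ?_ ?_ ?_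
  · exact hF₁_eq ▸ (monotone_setIntegral_Iic hg_int (ae_of_all _ hg_nonneg)).measurable.div_const _
  · exact hF₂_eq ▸ hf_meas.setIntegral_Iic_prod.div (hg_meas.comp measurable_fst)
  · rw [withDensity_congr_ae hD, hF₁_eq, ← one_smul ℝ≥0∞ (volume.restrict _), ← hg_total]
    exact map_withDensity_ofReal_integral_Iic_div hg_meas.aestronglyMeasurable
      (ae_of_all _ hg_nonneg) (by simp [hg_total])
  · filter_upwards [hD] with x hx
    simp only [hF₂_eq, hg]
    exact map_withDensity_ofReal_integral_Iic_div
      (hf_meas.comp measurable_prodMk_left).aestronglyMeasurable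
      (ae_of_all _ fun _ => hf_nonneg _) (hx ▸ ENNReal.ofReal_ne_top)
end

section
/- Let (Ω, 𝓕, P) be a probability space carrying random variables X : Ω → ℝ^d, Z : Ω → {0,1}, and integrable real-valued random variables Y⁰, Y¹, and set Y = (1−Z)Y⁰ + Z·Y¹. Assume strong ignorability: the pair (Y⁰, Y¹) is conditionally independent of Z given the σ-algebra σ(X). Then the conditional expectations satisfy E[Y | σ(X,Z)] = E[Y⁰ | σ(X)] almost surely on the event {Z = 0}. -/
open MeasureTheory ProbabilityTheory

/-!
On `{Z = 0}` the observed outcome is `Y⁰`, and `{Z = 0}` is `σ(X, Z)`-measurable, so there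
`E[Y | σ(X, Z)] = E[Y⁰ | σ(X, Z)]`. Since `σ(X, Z) = σ(X) ⊔ σ(Z)` and `Y⁰` is
`σ(Y⁰, Y¹)`-measurable, conditional independence gives `E[Y⁰ | σ(X) ⊔ σ(Z)] = E[Y⁰ | σ(X)]`:
it suffices to compare integrals over the π-system of sets `A ∩ B` with `A ∈ σ(X)`,
`B ∈ σ(Z)`, which for indicators of `σ(Y⁰, Y¹)`-sets is the product rule for conditional
probabilities and extends to all integrable `σ(Y⁰, Y¹)`-measurable functions by density.
-/

open MeasurableSpace Set

theorem IsPiSystem.image2_inter {α : Type*} {C D : Set (Set α)} (hC : IsPiSystem C)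
    (hD : IsPiSystem D) : IsPiSystem (image2 (· ∩ ·) C D) := by
  rintro _ ⟨s₁, hs₁, t₁, ht₁, rfl⟩ _ ⟨s₂, hs₂, t₂, ht₂, rfl⟩ hst
  rw [inter_inter_inter_comm] at hst ⊢
  exact mem_image2_of_mem (hC _ hs₁ _ hs₂ (hst.mono inter_subset_left))
    (hD _ ht₁ _ ht₂ (hst.mono inter_subset_right))

theorem MeasurableSpace.sup_eq_generateFrom_image2_inter {α : Type*}
    (m₁ m₂ : MeasurableSpace α) :
    m₁ ⊔ m₂ =
      generateFrom (image2 (· ∩ ·) {s | MeasurableSet[m₁] s} {t | MeasurableSet[m₂] t}) := by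
  refine le_antisymm (sup_le ?_ ?_) (generateFrom_le ?_)
  · intro s hs
    exact measurableSet_generateFrom ⟨s, hs, univ, MeasurableSet.univ, inter_univ s⟩
  · intro t ht
    exact measurableSet_generateFrom ⟨univ, MeasurableSet.univ, t, ht, univ_inter t⟩
  · rintro _ ⟨s, hs, t, ht, rfl⟩
    exact (le_sup_left (b := m₂) s hs).inter (le_sup_right (a := m₁) t ht)

section SetIntegral

variable {Ω E : Type*} [NormedAddCommGroup E] [NormedSpace ℝ E] {m mΩ : MeasurableSpace Ω}
  {μ : Measure Ω}

theorem setIntegral_eq_setIntegral_of_isPiSystem (hm : m ≤ mΩ) {π : Set (Set Ω)}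
    (h_eq : m = generateFrom π) (h_pi : IsPiSystem π) (h_univ : univ ∈ π) {f g : Ω → E}
    (hf : Integrable f μ) (hg : Integrable g μ)
    (basic : ∀ t ∈ π, ∫ x in t, f x ∂μ = ∫ x in t, g x ∂μ) {t : Set Ω}
    (ht : MeasurableSet[m] t) : ∫ x in t, f x ∂μ = ∫ x in t, g x ∂μ := by
  induction t, ht using induction_on_inter h_eq h_pi with
  | empty => simp
  | basic t ht => exact basic t ht
  | compl t ht h =>
    have h_whole := basic univ h_univ
    rw [setIntegral_univ, setIntegral_univ] at h_whole
    rw [setIntegral_compl (hm t ht) hf, setIntegral_compl (hm t ht) hg, h, h_whole]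
  | iUnion t h_disj ht h =>
    rw [integral_iUnion (fun i ↦ hm _ (ht i)) h_disj hf.integrableOn,
      integral_iUnion (fun i ↦ hm _ (ht i)) h_disj hg.integrableOn]
    exact tsum_congr h

variable [CompleteSpace E]

theorem continuous_setIntegral_condExp (hm : m ≤ mΩ) [SigmaFinite (μ.trim hm)] (s : Set Ω) :
    Continuous fun f : Ω →₁[μ] E ↦ ∫ x in s, (μ[f | m]) x ∂μ := by
  have h_eq : (fun f : Ω →₁[μ] E ↦ ∫ x in s, (μ[f | m]) x ∂μ)
      = fun f ↦ ∫ x in s, condExpL1CLM E hm μ f x ∂μ := by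
    funext f
    refine integral_congr_ae (ae_restrict_of_ae ?_)
    have h := condExp_ae_eq_condExpL1CLM hm (L1.integrable_coeFn f)
    rwa [Integrable.toL1_coeFn] at h
  rw [h_eq]
  exact (continuous_setIntegral s).comp (condExpL1CLM E hm μ).continuous

theorem ae_condExp_eq_of_eqOn {f g : Ω → E} {s : Set Ω} (hs : MeasurableSet[m] s)
    (hf : Integrable f μ) (hg : Integrable g μ) (hfg : EqOn f g s) :
    ∀ᵐ x ∂μ, x ∈ s → μ[f | m] x = μ[g | m] x := by
  filter_upwards [condExp_indicator hf hs, condExp_indicator hg hs] with x hfx hgx hx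
  rw [indicator_congr hfg, hgx, indicator_of_mem hx, indicator_of_mem hx] at hfx
  exact hfx.symm

end SetIntegral

section CondIndep

variable {Ω : Type*} {m' m₁ m₂ mΩ : MeasurableSpace Ω} [StandardBorelSpace Ω] {μ : Measure Ω}
  [IsFiniteMeasure μ] {hm' : m' ≤ mΩ}

theorem setIntegral_inter_condExp_indicator_of_condIndep (hm₁ : m₁ ≤ mΩ) (hm₂ : m₂ ≤ mΩ)
    (hind : CondIndep m' m₁ m₂ hm' μ) {A B C : Set Ω} (hA : MeasurableSet[m'] A)
    (hB : MeasurableSet[m₂] B) (hC : MeasurableSet[m₁] C) :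
    ∫ x in A ∩ B, (μ⟦C | m'⟧) x ∂μ = ∫ x in A ∩ B, C.indicator (fun _ ↦ (1 : ℝ)) x ∂μ := by
  have hB' : MeasurableSet B := hm₂ B hB
  have h_indicator : B.indicator (μ⟦C | m'⟧) = μ⟦C | m'⟧ * B.indicator fun _ ↦ 1 := by
    ext x; by_cases hx : x ∈ B <;> simp [hx]
  have h_int : Integrable (μ⟦C | m'⟧ * B.indicator fun _ ↦ 1) μ := by
    rw [← h_indicator]; exact integrable_condExp.indicator hB'
  have h_pull := condExp_mul_of_stronglyMeasurable_left stronglyMeasurable_condExp h_int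
    ((integrable_const (1 : ℝ)).indicator hB')
  have h_prod := (condIndep_iff m' m₁ m₂ hm' hm₁ hm₂ μ).1 hind C B hC hB
  calc ∫ x in A ∩ B, (μ⟦C | m'⟧) x ∂μ
      = ∫ x in A, (μ[μ⟦C | m'⟧ * B.indicator fun _ ↦ 1 | m']) x ∂μ := by
        rw [setIntegral_condExp hm' h_int hA, ← h_indicator, setIntegral_indicator hB']
    _ = ∫ x in A, (μ⟦C ∩ B | m'⟧) x ∂μ := by
        refine setIntegral_congr_ae (hm' A hA) ?_
        filter_upwards [h_pull, h_prod] with x h_pull h_prod _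
        rw [h_pull, h_prod]
    _ = ∫ x in A ∩ B, C.indicator (fun _ ↦ (1 : ℝ)) x ∂μ := by
        rw [setIntegral_condExp hm' ((integrable_const _).indicator ((hm₁ C hC).inter hB')) hA,
          ← setIntegral_indicator hB', indicator_indicator, inter_comm]

theorem setIntegral_inter_condExp_of_condIndep (hm₁ : m₁ ≤ mΩ) (hm₂ : m₂ ≤ mΩ)
    (hind : CondIndep m' m₁ m₂ hm' μ) {A B : Set Ω} (hA : MeasurableSet[m'] A)
    (hB : MeasurableSet[m₂] B) {f : Ω → ℝ} (hf : Integrable f μ)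
    (hfm : AEStronglyMeasurable[m₁] f μ) :
    ∫ x in A ∩ B, (μ[f | m']) x ∂μ = ∫ x in A ∩ B, f x ∂μ := by
  refine MemLp.induction_stronglyMeasurable hm₁ ENNReal.one_ne_top
    (fun f ↦ ∫ x in A ∩ B, (μ[f | m']) x ∂μ = ∫ x in A ∩ B, f x ∂μ) ?_ ?_ ?_ ?_
    (memLp_one_iff_integrable.2 hf) hfm
  · intro c C hC _
    have h_smul : (C.indicator fun _ ↦ c) = c • C.indicator fun _ ↦ (1 : ℝ) := by
      ext x; by_cases hx : x ∈ C <;> simp [hx]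
    rw [h_smul, integral_congr_ae (ae_restrict_of_ae (condExp_smul c _ m'))]
    simp only [Pi.smul_apply]
    rw [integral_smul, integral_smul,
      setIntegral_inter_condExp_indicator_of_condIndep hm₁ hm₂ hind hA hB hC]
  · intro u v _ hu hv _ _ hu_eq hv_eq
    rw [memLp_one_iff_integrable] at hu hv
    rw [integral_congr_ae (ae_restrict_of_ae (condExp_add hu hv m')),
      integral_add' integrable_condExp.integrableOn integrable_condExp.integrableOn, hu_eq, hv_eq,
      integral_add' hu.integrableOn hv.integrableOn]
  · exact isClosed_eq ((continuous_setIntegral_condExp hm' _).comp continuous_subtype_val)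
      ((continuous_setIntegral _).comp continuous_subtype_val)
  · intro u v huv _ hu_eq
    rwa [← integral_congr_ae (ae_restrict_of_ae huv),
      ← integral_congr_ae (ae_restrict_of_ae (condExp_congr_ae huv))]

theorem condExp_sup_ae_eq_condExp_of_condIndep (hm₁ : m₁ ≤ mΩ) (hm₂ : m₂ ≤ mΩ)
    (hind : CondIndep m' m₁ m₂ hm' μ) {f : Ω → ℝ} (hf : Integrable f μ)
    (hfm : AEStronglyMeasurable[m₁] f μ) :
    μ[f | m' ⊔ m₂] =ᵐ[μ] μ[f | m'] := by
  have h_meas : StronglyMeasurable[m' ⊔ m₂] (μ[f | m']) :=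
    stronglyMeasurable_condExp.mono le_sup_left
  refine (ae_eq_condExp_of_forall_setIntegral_eq (sup_le hm' hm₂) hf
    (fun _ _ _ ↦ integrable_condExp.integrableOn) (fun s hs _ ↦ ?_)
    h_meas.aestronglyMeasurable).symm
  refine setIntegral_eq_setIntegral_of_isPiSystem (sup_le hm' hm₂)
    (sup_eq_generateFrom_image2_inter m' m₂)
    ((@isPiSystem_measurableSet Ω m').image2_inter (@isPiSystem_measurableSet Ω m₂))
    ⟨univ, .univ, univ, .univ, inter_univ _⟩ integrable_condExp hf ?_ hs
  rintro _ ⟨A, hA, B, hB, rfl⟩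
  exact setIntegral_inter_condExp_of_condIndep hm₁ hm₂ hind hA hB hf hfm

end CondIndep

theorem stmt_2_general {Ω : Type*} [MeasurableSpace Ω] [StandardBorelSpace Ω]
    (P : Measure Ω) [IsProbabilityMeasure P] {d : ℕ}
    (X : Ω → EuclideanSpace ℝ (Fin d)) (Z : Ω → ℝ) (Y0 Y1 Y : Ω → ℝ)
    (hX : Measurable X) (hZ : Measurable Z) (hY0m : Measurable Y0) (hY1m : Measurable Y1)
    (hZ01 : ∀ ω, Z ω = 0 ∨ Z ω = 1)
    (hY0int : Integrable Y0 P) (hY1int : Integrable Y1 P)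
    (hY : ∀ ω, Y ω = (1 - Z ω) * Y0 ω + Z ω * Y1 ω)
    (hignor : CondIndepFun (MeasurableSpace.comap X inferInstance) hX.comap_le
      (fun ω => (Y0 ω, Y1 ω)) Z P) :
    ∀ᵐ ω ∂P, Z ω = 0 →
      (P[Y | MeasurableSpace.comap (fun ω => (X ω, Z ω)) inferInstance]) ω
        = (P[Y0 | MeasurableSpace.comap X inferInstance]) ω := by
  have hσ : MeasurableSpace.comap (fun ω ↦ (X ω, Z ω)) inferInstance
      = MeasurableSpace.comap X inferInstance ⊔ MeasurableSpace.comap Z inferInstance :=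
    comap_prodMk X Z
  have hZ_bdd : ∀ ω, ‖Z ω‖ ≤ 1 ∧ ‖1 - Z ω‖ ≤ 1 := fun ω ↦ by
    rcases hZ01 ω with h | h <;> simp [h]
  have hYint : Integrable Y P := by
    rw [show Y = _ from funext hY]
    exact (hY0int.bdd_mul (measurable_const.sub hZ).aestronglyMeasurable
      (.of_forall fun ω ↦ (hZ_bdd ω).2)).add
      (hY1int.bdd_mul hZ.aestronglyMeasurable (.of_forall fun ω ↦ (hZ_bdd ω).1))
  have hY_control : EqOn Y Y0 (Z ⁻¹' {0}) := fun ω (hω : Z ω = 0) ↦ by simp [hY ω, hω]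
  have h_control_meas : MeasurableSet[MeasurableSpace.comap (fun ω ↦ (X ω, Z ω)) inferInstance]
      (Z ⁻¹' {0}) :=
    hσ ▸ le_sup_right (a := MeasurableSpace.comap X inferInstance) _
      ⟨{0}, measurableSet_singleton 0, rfl⟩
  have hY0_meas : AEStronglyMeasurable[MeasurableSpace.comap (fun ω ↦ (Y0 ω, Y1 ω)) inferInstance]
      Y0 P :=
    (measurable_fst.comp (comap_measurable _)).aestronglyMeasurable
  filter_upwards [ae_condExp_eq_of_eqOn h_control_meas hYint hY0int hY_control,
    condExp_sup_ae_eq_condExp_of_condIndep (hY0m.prodMk hY1m).comap_le hZ.comap_le hignor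
      hY0int hY0_meas] with ω h_control h_ignor hω
  rw [h_control hω, hσ, h_ignor]

/-- **Identification of the control response under strong ignorability.**
In the potential-outcome model with observed outcome `Y = (1−Z)Y⁰ + Z·Y¹` and strong
ignorability (`(Y⁰,Y¹)` conditionally independent of `Z` given `σ(X)`), the conditional
expectation of `Y` given `σ(X,Z)` coincides with `E[Y⁰ | σ(X)]` almost surely on `{Z = 0}`. -/
theorem stmt_2 {Ω : Type*} [MeasurableSpace Ω] [StandardBorelSpace Ω] [Nonempty Ω]
    (P : Measure Ω) [IsProbabilityMeasure P] {d : ℕ}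
    (X : Ω → EuclideanSpace ℝ (Fin d)) (Z : Ω → ℝ) (Y0 Y1 Y : Ω → ℝ)
    (hX : Measurable X) (hZ : Measurable Z) (hY0m : Measurable Y0) (hY1m : Measurable Y1)
    (hZ01 : ∀ ω, Z ω = 0 ∨ Z ω = 1)
    (hY0int : Integrable Y0 P) (hY1int : Integrable Y1 P)
    (hY : ∀ ω, Y ω = (1 - Z ω) * Y0 ω + Z ω * Y1 ω)
    (hignor : CondIndepFun (MeasurableSpace.comap X inferInstance) hX.comap_le
      (fun ω => (Y0 ω, Y1 ω)) Z P) :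
    ∀ᵐ ω ∂P, Z ω = 0 →
      (P[Y | MeasurableSpace.comap (fun ω => (X ω, Z ω)) inferInstance]) ω
        = (P[Y0 | MeasurableSpace.comap X inferInstance]) ω :=
  stmt_2_general P X Z Y0 Y1 Y hX hZ hY0m hY1m hZ01 hY0int hY1int hY hignor
end

section
/- Let d ≥ 1, α, β ∈ (0,1], and M, M' > 0. Let μ : ℝ^d → ℝ be bounded, measurable and (M,α)-Hölder; let g : ℝ^d → ℝ be bounded, measurable, (M',β)-Hölder, and vanish outside a compact set S of finite Lebesgue measure λ(S). Let K : ℝ^d → ℝ be integrable with K(−u) = K(u) for all u, ∫_{ℝ^d} K(u) du = 1, and κ := ∫_{ℝ^d} ‖u‖^{α+β} |K(u)| du < ∞. Then for every h > 0, | ∫_{ℝ^d} ∫_{ℝ^d} μ(x) h^{−d} K((x−y)/h) g(y) dy dx − ∫_{ℝ^d} μ(x) g(x) dx | ≤ M·M'·κ·λ(S)·h^{α+β}. -/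
open MeasureTheory Filter Topology Module
open scoped ENNReal

/-!
Substituting `y = x - h u` turns the smoothed functional into `∫ K(u) T(h u) du`, where
`T v = ∫ μ(x) g(x - v) dx` is `shiftPairing`. As `K` is even with unit mass, the bias is
`½ ∫ K(u) (T(hu) + T(-hu) - 2 T 0) du`, and the second difference
`T v + T(-v) - 2 T 0 = ∫ (μ(x) - μ(x - v)) (g(x - v) - g(x)) dx` integrates a product of an
`α`-Hölder and a `β`-Hölder increment over `S ∪ (S + v)`, so it is at most
`2 λ(S) M M' ‖v‖^(α+β)`: the two smoothness orders add up.
-/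

theorem continuous_of_abs_sub_le_mul_rpow {X : Type*} [SeminormedAddCommGroup X] {f : X → ℝ}
    {M α : ℝ} (hα : 0 < α) (hf : ∀ x y, |f x - f y| ≤ M * ‖x - y‖ ^ α) : Continuous f := by
  refine continuous_iff_continuousAt.2 fun x => tendsto_iff_norm_sub_tendsto_zero.2 ?_
  have hbound : Tendsto (fun y => M * ‖y - x‖ ^ α) (𝓝 x) (𝓝 0) := by
    have hcont : Continuous fun y => M * ‖y - x‖ ^ α := by
      have := Real.continuous_rpow_const hα.le
      fun_prop
    simpa [Real.zero_rpow hα.ne'] using hcont.tendsto x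
  exact squeeze_zero (fun _ => norm_nonneg _) (fun y => hf y x) hbound

section ShiftPairing

variable {G : Type*} [AddCommGroup G] [MeasurableSpace G] {ν : Measure G} {f g : G → ℝ}

noncomputable def shiftPairing (ν : Measure G) (f g : G → ℝ) (v : G) : ℝ :=
  ∫ x, f x * g (x - v) ∂ν

@[simp]
theorem shiftPairing_zero : shiftPairing ν f g 0 = ∫ x, f x * g x ∂ν := by
  simp [shiftPairing]

theorem stronglyMeasurable_shiftPairing [MeasurableSub₂ G] [SFinite ν] (hf : Measurable f)
    (hg : Measurable g) : StronglyMeasurable (shiftPairing ν f g) :=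
  ((hf.comp measurable_snd).mul
    (hg.comp (measurable_snd.sub measurable_fst))).stronglyMeasurable.integral_prod_right'

variable [MeasurableAdd G] [ν.IsAddRightInvariant] {B : ℝ}

theorem integrable_mul_comp_sub (hf : AEStronglyMeasurable f ν) (hfB : ∀ x, |f x| ≤ B)
    (hg : Integrable g ν) (v : G) : Integrable (fun x => f x * g (x - v)) ν :=
  (hg.comp_sub_right v).bdd_mul hf (Eventually.of_forall hfB)

theorem abs_shiftPairing_le (hfB : ∀ x, |f x| ≤ B) (hg : Integrable g ν) (v : G) :
    |shiftPairing ν f g v| ≤ B * ∫ x, |g x| ∂ν := by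
  have hbound : Integrable (fun x => B * |g (x - v)|) ν := (hg.comp_sub_right v).abs.const_mul B
  calc |shiftPairing ν f g v| ≤ ∫ x, B * |g (x - v)| ∂ν :=
        norm_integral_le_of_norm_le hbound (Eventually.of_forall fun x => by
          rw [Real.norm_eq_abs, abs_mul]
          exact mul_le_mul_of_nonneg_right (hfB x) (abs_nonneg _))
    _ = B * ∫ x, |g x| ∂ν := by
        rw [integral_const_mul, integral_sub_right_eq_self (fun x => |g x|) v]

theorem shiftPairing_add_neg_sub_two_mul [MeasurableSub G] (hf : Measurable f)
    (hfB : ∀ x, |f x| ≤ B) (hg : Integrable g ν) (v : G) :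
    shiftPairing ν f g v + shiftPairing ν f g (-v) - 2 * shiftPairing ν f g 0
      = ∫ x, (f x - f (x - v)) * (g (x - v) - g x) ∂ν := by
  have hfv : Measurable fun x => f (x - v) := hf.comp (measurable_sub_const v)
  have hneg : shiftPairing ν f g (-v) = ∫ x, f (x - v) * g x ∂ν := by
    simpa [shiftPairing] using (integral_sub_right_eq_self (fun x => f x * g (x + v)) v).symm
  have hzero : shiftPairing ν f g 0 = ∫ x, f (x - v) * g (x - v) ∂ν := by
    rw [shiftPairing_zero, integral_sub_right_eq_self (fun x => f x * g x) v]
  have I₁ := integrable_mul_comp_sub hf.aestronglyMeasurable hfB hg v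
  have I₂ := integrable_mul_comp_sub hfv.aestronglyMeasurable (fun x => hfB (x - v)) hg 0
  have I₃ := integrable_mul_comp_sub hf.aestronglyMeasurable hfB hg 0
  have I₄ := integrable_mul_comp_sub hfv.aestronglyMeasurable (fun x => hfB (x - v)) hg v
  simp only [sub_zero] at I₂ I₃
  have I₁₂ : Integrable (fun x => f x * g (x - v) + f (x - v) * g x) ν := I₁.add I₂
  have I₃₄ : Integrable (fun x => f x * g x + f (x - v) * g (x - v)) ν := I₃.add I₄
  calc shiftPairing ν f g v + shiftPairing ν f g (-v) - 2 * shiftPairing ν f g 0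
      = (∫ x, f x * g (x - v) ∂ν) + (∫ x, f (x - v) * g x ∂ν)
          - ((∫ x, f x * g x ∂ν) + ∫ x, f (x - v) * g (x - v) ∂ν) := by
        rw [hneg, two_mul]
        nth_rewrite 2 [hzero]
        rw [shiftPairing_zero, shiftPairing]
    _ = ∫ x, (f x * g (x - v) + f (x - v) * g x) - (f x * g x + f (x - v) * g (x - v)) ∂ν := by
        rw [integral_sub I₁₂ I₃₄, integral_add I₁ I₂, integral_add I₃ I₄]
    _ = ∫ x, (f x - f (x - v)) * (g (x - v) - g x) ∂ν := by
        congr 1 with x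
        ring

end ShiftPairing

theorem abs_integral_sub_mul_sub_le {E : Type*} [NormedAddCommGroup E] [MeasurableSpace E]
    [MeasurableAdd E] {ν : Measure E} [ν.IsAddRightInvariant] {f g : E → ℝ} {M M' α β : ℝ}
    {S : Set E} (hα : 0 ≤ α) (hβ : 0 ≤ β) (hf : ∀ x y, |f x - f y| ≤ M * ‖x - y‖ ^ α)
    (hg : ∀ x y, |g x - g y| ≤ M' * ‖x - y‖ ^ β) (hS : ν S < ∞) (hgS : ∀ x ∉ S, g x = 0)
    (v : E) :
    |∫ x, (f x - f (x - v)) * (g (x - v) - g x) ∂ν| ≤ 2 * (M * M' * ν.real S) * ‖v‖ ^ (α + β) := by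
  set c := M * M' * ‖v‖ ^ (α + β) with hc
  have hpointwise : ∀ x, |(f x - f (x - v)) * (g (x - v) - g x)| ≤ c := by
    intro x
    have hfx : |f x - f (x - v)| ≤ M * ‖v‖ ^ α := by simpa using hf x (x - v)
    have hgx : |g (x - v) - g x| ≤ M' * ‖v‖ ^ β := by simpa using hg (x - v) x
    calc |(f x - f (x - v)) * (g (x - v) - g x)|
        ≤ (M * ‖v‖ ^ α) * (M' * ‖v‖ ^ β) := by
          rw [abs_mul]
          exact mul_le_mul hfx hgx (abs_nonneg _) ((abs_nonneg _).trans hfx)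
      _ = c := by
          rw [hc, Real.rpow_add_of_nonneg (norm_nonneg v) hα hβ]
          ring
  set U := S ∪ (fun x => x + -v) ⁻¹' S
  have hvanish : ∀ x ∉ U, (f x - f (x - v)) * (g (x - v) - g x) = 0 := by
    intro x hx
    simp only [U, Set.mem_union, Set.mem_preimage, not_or, ← sub_eq_add_neg] at hx
    rw [hgS _ hx.1, hgS _ hx.2, sub_self, mul_zero]
  have hU : ν.real U ≤ 2 * ν.real S := by
    refine (measureReal_union_le _ _).trans_eq ?_
    simp [Measure.real, measure_preimage_add_right, two_mul]
  have hUfin : ν U < ∞ :=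
    (measure_union_le _ _).trans_lt (by simpa [measure_preimage_add_right] using hS)
  calc |∫ x, (f x - f (x - v)) * (g (x - v) - g x) ∂ν|
      = ‖∫ x in U, (f x - f (x - v)) * (g (x - v) - g x) ∂ν‖ := by
        rw [setIntegral_eq_integral_of_forall_compl_eq_zero hvanish, Real.norm_eq_abs]
    _ ≤ c * ν.real U := norm_setIntegral_le_of_norm_le_const hUfin fun x _ => hpointwise x
    _ ≤ c * (2 * ν.real S) := mul_le_mul_of_nonneg_left hU ((abs_nonneg _).trans (hpointwise 0))
    _ = 2 * (M * M' * ν.real S) * ‖v‖ ^ (α + β) := by ring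

theorem abs_integral_mul_sub_le_of_even {G : Type*} [AddGroup G] [MeasurableSpace G]
    [MeasurableNeg G] {ν : Measure G} [ν.IsNegInvariant] {K T φ : G → ℝ} {C : ℝ}
    (hK : Integrable K ν) (hKeven : ∀ u, K (-u) = K u) (hK1 : ∫ u, K u ∂ν = 1)
    (hKT : Integrable (fun u => K u * T u) ν) (hφ : Integrable (fun u => φ u * |K u|) ν)
    (hT : ∀ u, |T u + T (-u) - 2 * T 0| ≤ 2 * C * φ u) :
    |∫ u, K u * T u ∂ν - T 0| ≤ C * ∫ u, φ u * |K u| ∂ν := by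
  have hKT' : Integrable (fun u => K u * T (-u)) ν := by simpa [hKeven] using hKT.comp_neg
  have hreflect : ∫ u, K u * T (-u) ∂ν = ∫ u, K u * T u ∂ν := by
    simpa [hKeven] using integral_neg_eq_self (fun u => K u * T u) ν
  have hsymm : 2 * (∫ u, K u * T u ∂ν - T 0) = ∫ u, K u * (T u + T (-u) - 2 * T 0) ∂ν := by
    have hKT₀ : Integrable (fun u => K u * T u + K u * T (-u)) ν := hKT.add hKT'
    simp only [mul_sub, mul_add]
    rw [integral_sub hKT₀ (hK.mul_const _), integral_add hKT hKT', integral_mul_const, hK1,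
      hreflect]
    ring
  have hbound : ‖∫ u, K u * (T u + T (-u) - 2 * T 0) ∂ν‖ ≤ ∫ u, 2 * C * (φ u * |K u|) ∂ν :=
    norm_integral_le_of_norm_le (hφ.const_mul _) (Eventually.of_forall fun u => by
      rw [Real.norm_eq_abs, abs_mul]
      exact (mul_le_mul_of_nonneg_left (hT u) (abs_nonneg (K u))).trans_eq (by ring))
  rw [integral_const_mul, ← hsymm, Real.norm_eq_abs, abs_mul, abs_two] at hbound
  linarith

section Smoothing

variable {E : Type*} [NormedAddCommGroup E] [NormedSpace ℝ E] [FiniteDimensional ℝ E]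
  [MeasurableSpace E] [BorelSpace E] {ν : Measure E} [ν.IsAddHaarMeasure]

theorem integral_scaled_kernel_mul {K F : E → ℝ} {h : ℝ} (hh : 0 < h) :
    ∫ v, (1 / h ^ finrank ℝ E) * K (h⁻¹ • v) * F v ∂ν = ∫ u, K u * F (h • u) ∂ν := by
  have hscale := Measure.integral_comp_smul_of_nonneg ν
    (fun v => (1 / h ^ finrank ℝ E) * K (h⁻¹ • v) * F v) h (hR := hh.le)
  simp only [inv_smul_smul₀ hh.ne', smul_eq_mul] at hscale
  calc ∫ v, (1 / h ^ finrank ℝ E) * K (h⁻¹ • v) * F v ∂ν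
      = h ^ finrank ℝ E *
          ((h ^ finrank ℝ E)⁻¹ * ∫ v, (1 / h ^ finrank ℝ E) * K (h⁻¹ • v) * F v ∂ν) := by
        field_simp
    _ = ∫ u, K u * F (h • u) ∂ν := by
        rw [← hscale, ← integral_const_mul]
        congr 1 with u
        field_simp

theorem integral_integral_rescaled_kernel_eq {f g K : E → ℝ} {B h : ℝ} (hh : 0 < h)
    (hK : Integrable K ν) (hf : Measurable f) (hfB : ∀ x, |f x| ≤ B) (hg : Integrable g ν) :
    ∫ x, ∫ y, f x * ((1 / h ^ finrank ℝ E) * K (h⁻¹ • (x - y))) * g y ∂ν ∂ν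
      = ∫ u, K u * shiftPairing ν f g (h • u) ∂ν := by
  set Kh : E → ℝ := fun v => (1 / h ^ finrank ℝ E) * K (h⁻¹ • v)
  have hKh : Integrable Kh ν := (hK.comp_smul (inv_ne_zero hh.ne')).const_mul _
  have hint : Integrable (fun p : E × E => f p.1 * Kh p.2 * g (p.1 - p.2)) (ν.prod ν) := by
    simpa [mul_assoc] using (hKh.convolution_integrand (ContinuousLinearMap.mul ℝ ℝ) hg).bdd_mul
      (hf.comp measurable_fst).aestronglyMeasurable (Eventually.of_forall fun p => hfB p.1)
  calc ∫ x, ∫ y, f x * Kh (x - y) * g y ∂ν ∂ν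
      = ∫ x, ∫ v, f x * Kh v * g (x - v) ∂ν ∂ν := by
        congr 1 with x
        simpa using integral_sub_left_eq_self (fun v => f x * Kh v * g (x - v)) ν x
    _ = ∫ v, ∫ x, f x * Kh v * g (x - v) ∂ν ∂ν :=
        integral_integral_swap (f := fun x v => f x * Kh v * g (x - v)) hint
    _ = ∫ v, Kh v * shiftPairing ν f g v ∂ν := by
        congr 1 with v
        rw [shiftPairing, ← integral_const_mul]
        congr 1 with x
        ring
    _ = ∫ u, K u * shiftPairing ν f g (h • u) ∂ν := integral_scaled_kernel_mul hh

end Smoothing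

theorem stmt_3_general (d : ℕ) (α β M M' : ℝ)
    (hα : α ∈ Set.Ioc (0 : ℝ) 1) (hβ : β ∈ Set.Ioc (0 : ℝ) 1)
    (μ g K : EuclideanSpace ℝ (Fin d) → ℝ)
    (hμbdd : ∃ B, ∀ x, |μ x| ≤ B)
    (hμHolder : ∀ x y, |μ x - μ y| ≤ M * ‖x - y‖ ^ α)
    (hgHolder : ∀ x y, |g x - g y| ≤ M' * ‖x - y‖ ^ β)
    (S : Set (EuclideanSpace ℝ (Fin d))) (hScompact : IsCompact S)
    (hgS : ∀ x ∉ S, g x = 0)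
    (hKint : Integrable K volume) (hKsymm : ∀ u, K (-u) = K u)
    (hKone : ∫ u, K u = 1)
    (κ : ℝ) (hκ : κ = ∫ u, ‖u‖ ^ (α + β) * |K u|)
    (hκint : Integrable (fun u => ‖u‖ ^ (α + β) * |K u|) volume) :
    ∀ h : ℝ, 0 < h →
      |(∫ x, ∫ y, μ x * ((1 / h ^ d) * K (h⁻¹ • (x - y))) * g y) - ∫ x, μ x * g x|
        ≤ M * M' * κ * (volume S).toReal * h ^ (α + β) := by
  intro h hh
  obtain ⟨B, hB⟩ := hμbdd
  have hμ : Measurable μ := (continuous_of_abs_sub_le_mul_rpow hα.1 hμHolder).measurable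
  have hgc : Continuous g := continuous_of_abs_sub_le_mul_rpow hβ.1 hgHolder
  have hg : Integrable g :=
    hgc.integrable_of_hasCompactSupport (HasCompactSupport.intro hScompact hgS)
  have hsmooth := integral_integral_rescaled_kernel_eq hh hKint hμ hB hg (ν := volume)
  rw [finrank_euclideanSpace_fin] at hsmooth
  have hKT : Integrable (fun u => K u * shiftPairing volume μ g (h • u)) :=
    hKint.mul_bdd ((stronglyMeasurable_shiftPairing hμ hgc.measurable).comp_measurable
      (measurable_const_smul h)).aestronglyMeasurable
      (Eventually.of_forall fun u => abs_shiftPairing_le hB hg (h • u))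
  have hsecond (u : EuclideanSpace ℝ (Fin d)) :
      |shiftPairing volume μ g (h • u) + shiftPairing volume μ g (h • -u)
          - 2 * shiftPairing volume μ g (h • 0)|
        ≤ 2 * (M * M' * volume.real S * h ^ (α + β)) * ‖u‖ ^ (α + β) := by
    rw [smul_neg, smul_zero, shiftPairing_add_neg_sub_two_mul hμ hB hg]
    refine (abs_integral_sub_mul_sub_le hα.1.le hβ.1.le hμHolder hgHolder
      hScompact.measure_lt_top hgS (h • u)).trans_eq ?_
    rw [norm_smul, Real.norm_of_nonneg hh.le, Real.mul_rpow hh.le (norm_nonneg u)]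
    ring
  have hbias := abs_integral_mul_sub_le_of_even hKint hKsymm hKone hKT hκint hsecond
  rw [smul_zero, shiftPairing_zero] at hbias
  rw [hsmooth, hκ]
  exact hbias.trans_eq (by rw [measureReal_def]; ring)

/-- **Bias bound for the bilinear kernel-smoothed functional.**
If `μ` is `(M,α)`-Hölder, `g` is `(M',β)`-Hölder with compact support `S`, and `K` is a
symmetric integrable kernel with `∫ K = 1` and `κ = ∫ ‖u‖^{α+β} |K u| du < ∞`, then for
every bandwidth `h > 0` the smoothing bias of the bilinear functional satisfies
`|∬ μ(x) K_h(x−y) g(y) dy dx − ∫ μ g| ≤ M·M'·κ·λ(S)·h^{α+β}`. -/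
theorem stmt_3 (d : ℕ) (hd : 1 ≤ d) (α β M M' : ℝ)
    (hα : α ∈ Set.Ioc (0 : ℝ) 1) (hβ : β ∈ Set.Ioc (0 : ℝ) 1)
    (hM : 0 < M) (hM' : 0 < M')
    (μ g K : EuclideanSpace ℝ (Fin d) → ℝ)
    (hμmeas : Measurable μ) (hμbdd : ∃ B, ∀ x, |μ x| ≤ B)
    (hμHolder : ∀ x y, |μ x - μ y| ≤ M * ‖x - y‖ ^ α)
    (hgmeas : Measurable g) (hgbdd : ∃ B, ∀ x, |g x| ≤ B)
    (hgHolder : ∀ x y, |g x - g y| ≤ M' * ‖x - y‖ ^ β)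
    (S : Set (EuclideanSpace ℝ (Fin d))) (hScompact : IsCompact S)
    (hgS : ∀ x ∉ S, g x = 0)
    (hKint : Integrable K volume) (hKsymm : ∀ u, K (-u) = K u)
    (hKone : ∫ u, K u = 1)
    (κ : ℝ) (hκ : κ = ∫ u, ‖u‖ ^ (α + β) * |K u|)
    (hκint : Integrable (fun u => ‖u‖ ^ (α + β) * |K u|) volume) :
    ∀ h : ℝ, 0 < h →
      |(∫ x, ∫ y, μ x * ((1 / h ^ d) * K (h⁻¹ • (x - y))) * g y) - ∫ x, μ x * g x|
        ≤ M * M' * κ * (volume S).toReal * h ^ (α + β) :=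
  stmt_3_general d α β M M' hα hβ μ g K hμbdd hμHolder hgHolder S hScompact hgS hKint hKsymm hKone κ
    hκ hκint
end
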